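/- In the situation below, assume n_i < ∞ for all i = 1,…,d, and assume that the Janet basis J for ⟨p_1,…,p_d⟩ is the Janet decomposition of an auto-reduced finite set G with ⟨G⟩ = ⟨p_1,…,p_d⟩. For each i let b_i be the element with (b_i,μ_i) ∈ J and lm(b_i) = φ^{n_i}·κ_i. Then for every w = φ^j·κ_i ∈ W_gen (i.e., 0 ≤ j < n_i): NF(φ·w, J) = φ·w if j < n_i − 1, and NF(φ·w, J) = φ·w − lc(b_i)^{−1}·b_i if j = n_i − 1. -/

import Mathlib

/-!
Common setup: the skew polynomial ring `D = K{φ,ρ}` (with commuting endomorphisms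
`γφ, γρ : K → K`, `φ·x = γφ(x)·φ`, `ρ·x = γρ(x)·ρ`), the free left `D`-module
`𝓕 = ⊕_{i=1}^d D κ_i`, its monomials `φ^k ρ^j κ_i`, the monomial order, cones,
Janet bases, and the data attached to a `D`-module `M` that is free over `K⟨φ⟩`.

`𝓕` is realized concretely as finitely supported coefficient functions on the
set of monomial indices `(i, k, j) ↔ φ^k ρ^j κ_i`; multiplication by `φ` resp. `ρ`
is the K-semilinear shift operator `PhiMul` resp. `RhoMul`.
-/

namespace JanetSetup

/-- Index of a monomial `φ^k ρ^j κ_i` of `𝓕`: the triple `(i, k, j)`. -/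
abbrev MonIx (d : ℕ) := Fin d × ℕ × ℕ

/-- The free module `𝓕 = ⊕_{i=1}^d D κ_i`, as coefficient functions on monomials. -/
abbrev Fr (K : Type) [Field K] (d : ℕ) : Type := MonIx d →₀ K

variable {K : Type} [Field K] {d : ℕ}

/-- Left multiplication by the variable `φ` on `𝓕`. -/
noncomputable def PhiMul (γφ : K →+* K) (f : Fr K d) : Fr K d :=
  Finsupp.mapDomain (fun m => (m.1, m.2.1 + 1, m.2.2))
    (Finsupp.mapRange (fun x => γφ x) (map_zero γφ) f)

/-- Left multiplication by the variable `ρ` on `𝓕`. -/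
noncomputable def RhoMul (γρ : K →+* K) (f : Fr K d) : Fr K d :=
  Finsupp.mapDomain (fun m => (m.1, m.2.1, m.2.2 + 1))
    (Finsupp.mapRange (fun x => γρ x) (map_zero γρ) f)

/-- The left `D`-submodule of `𝓕` generated by a set `s` (as a `K`-subspace:
the `K`-span of all `φ^k ρ^j g`, `g ∈ s`). -/
noncomputable def DSpan (γφ γρ : K →+* K) (s : Set (Fr K d)) : Submodule K (Fr K d) :=
  Submodule.span K
    {x | ∃ (k j : ℕ) (g : Fr K d), g ∈ s ∧ x = (PhiMul γφ)^[k] ((RhoMul γρ)^[j] g)}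

/-- The monomial order: lexicographic with `ρ ≺ φ`, position-over-term with
`κ_{i₁} ≻ κ_{i₂}` for `i₁ < i₂`. -/
def MLt (a b : MonIx d) : Prop :=
  b.1 < a.1 ∨ (a.1 = b.1 ∧ (a.2.1 < b.2.1 ∨ (a.2.1 = b.2.1 ∧ a.2.2 < b.2.2)))

/-- `m` is the leading monomial of `f`. -/
def IsLm (f : Fr K d) (m : MonIx d) : Prop :=
  m ∈ f.support ∧ ∀ m' ∈ f.support, m' ≠ m → MLt m' m

/-- The `μ`-cone of a monomial `m`; `μ = (φ ∈ μ, ρ ∈ μ)` as a pair of Booleans. -/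
def Cone (μ : Bool × Bool) (m : MonIx d) : Set (MonIx d) :=
  {x | ∃ a b : ℕ, (μ.1 = true ∨ a = 0) ∧ (μ.2 = true ∨ b = 0) ∧
      x = (m.1, m.2.1 + a, m.2.2 + b)}

/-- A Janet basis `{(b_1,μ_1),…,(b_r,μ_r)}` for the submodule `N ⊆ 𝓕`:
the `b_i` generate `N` as a left `D`-module and the set of leading monomials of
nonzero elements of `N` is the disjoint union of the cones `Mon(μ_i)·lm(b_i)`. -/
structure JanetBasis (γφ γρ : K →+* K) (d : ℕ) (N : Submodule K (Fr K d)) where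
  r : ℕ
  b : Fin r → Fr K d
  μ : Fin r → Bool × Bool
  /-- the leading monomial of `b i` -/
  lmb : Fin r → MonIx d
  b_ne : ∀ i, b i ≠ 0
  b_lm : ∀ i, IsLm (b i) (lmb i)
  pair_inj : Function.Injective fun i => (b i, μ i)
  span_eq : DSpan γφ γρ (Set.range b) = N
  lm_cover : ∀ f ∈ N, f ≠ 0 → ∀ m, IsLm f m → ∃ i, m ∈ Cone (μ i) (lmb i)
  cone_lm : ∀ i, ∀ m ∈ Cone (μ i) (lmb i), ∃ f ∈ N, f ≠ 0 ∧ IsLm f m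
  disj : ∀ i i' m, m ∈ Cone (μ i) (lmb i) → m ∈ Cone (μ i') (lmb i') → i = i'

variable (γφ γρ : K →+* K)

/-- `f` is reduced (in normal form) w.r.t. the pairs of `J` indexed by `P`:
no monomial of `f` lies in one of the corresponding cones. -/
def IsReduced {N : Submodule K (Fr K d)} (J : JanetBasis γφ γρ d N)
    (P : Set (Fin J.r)) (f : Fr K d) : Prop :=
  ∀ m ∈ f.support, ∀ i ∈ P, m ∉ Cone (J.μ i) (J.lmb i)

/-- `h` is the normal form `NF(g, ·)` of `g` with respect to the pairs of `J`
indexed by `P`: the reduction process subtracts left multiples of the `b i`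
(`i ∈ P`), so `g - h` lies in the `D`-span of these, and the result is reduced. -/
def IsNFOf {N : Submodule K (Fr K d)} (J : JanetBasis γφ γρ d N)
    (P : Set (Fin J.r)) (g h : Fr K d) : Prop :=
  g - h ∈ DSpan γφ γρ (J.b '' P) ∧ IsReduced γφ γρ J P h

/-- The projection `pr : 𝓕 → M`, `φ^k ρ^j κ_i ↦ F^k S^j κ̄_i`, for a `D`-module `M`
with `φ`-action `F`, `ρ`-action `S` and distinguished elements `κb i = κ̄_i`. -/
noncomputable def pr {M : Type} [AddCommGroup M] [Module K M]
    (F S : M →+ M) (κb : Fin d → M) (f : Fr K d) : M :=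
  f.sum fun m x => x • F^[m.2.1] (S^[m.2.2] (κb m.1))

/-- The relation `p_i = ρ κ_i − Σ_j D_{ij} κ_j ∈ 𝓕`, where the entry `D_{ij} ∈ K⟨φ⟩`
is recorded as the finitely supported coefficient function of its powers of `φ`. -/
noncomputable def pelt (Dmat : Fin d → Fin d → (ℕ →₀ K)) (i : Fin d) : Fr K d :=
  Finsupp.single (i, 0, 1) (1 : K)
    - ∑ j : Fin d, (Dmat i j).sum fun k x => Finsupp.single (j, k, 0) x

/-- `n_i = inf{n | ∃ (b,μ) ∈ J, lm(b) = φ^n κ_i} ∈ ℕ∪{∞}`. -/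
noncomputable def nVal {N : Submodule K (Fr K d)} (J : JanetBasis γφ γρ d N)
    (i : Fin d) : ℕ∞ :=
  sInf {c : ℕ∞ | ∃ n : ℕ, c = n ∧ ∃ ix, J.lmb ix = (i, n, 0)}

/-- `m_i = inf{n | ∃ (b,μ) ∈ J, ∃ l ≥ 0, lm(b) = φ^n ρ^l κ_i} ∈ ℕ∪{∞}`. -/
noncomputable def mVal {N : Submodule K (Fr K d)} (J : JanetBasis γφ γρ d N)
    (i : Fin d) : ℕ∞ :=
  sInf {c : ℕ∞ | ∃ n : ℕ, c = n ∧ ∃ ix l, J.lmb ix = (i, n, l)}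

/-- `W_gen = {φ^j κ_i | 1 ≤ i ≤ d, 0 ≤ j < n_i} ⊆ 𝓕`. -/
def Wgen {N : Submodule K (Fr K d)} (J : JanetBasis γφ γρ d N) : Set (Fr K d) :=
  {w | ∃ (i : Fin d) (j : ℕ), (j : ℕ∞) < nVal γφ γρ J i ∧
      w = Finsupp.single (i, j, 0) (1 : K)}

/-- `W_ind = {φ^j κ_i | 1 ≤ i ≤ d, 0 ≤ j < m_i} ⊆ 𝓕`. -/
def Wind {N : Submodule K (Fr K d)} (J : JanetBasis γφ γρ d N) : Set (Fr K d) :=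
  {w | ∃ (i : Fin d) (j : ℕ), (j : ℕ∞) < mVal γφ γρ J i ∧
      w = Finsupp.single (i, j, 0) (1 : K)}

end JanetSetup

namespace JanetSetup

variable {K : Type} [Field K] {d : ℕ}

/-- `G` (a finite subset of `𝓕 ∖ {0}`, recorded with its leading monomials `lmg`)
is auto-reduced: no monomial of a `g ∈ G` lies in the full cone
`Mon({φ,ρ})·lm(g')` of another `g' ∈ G`. -/
def AutoReduced {s : ℕ} (G : Fin s → Fr K d) (lmg : Fin s → MonIx d) : Prop :=
  (∀ a, G a ≠ 0 ∧ IsLm (G a) (lmg a)) ∧ Function.Injective G ∧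
    ∀ a, ∀ m ∈ (G a).support, ∀ a', a' ≠ a → m ∉ Cone (true, true) (lmg a')

/-- (For `G` ordered by descending leading monomials:) `a` is the first index of
`G` whose leading monomial is a multiple of its `κ`-index. -/
def IsFirst {s : ℕ} (lmg : Fin s → MonIx d) (a : Fin s) : Prop :=
  ∀ a' : Fin s, a' < a → (lmg a').1 ≠ (lmg a).1

/-- The set of pairs produced by the Janet decomposition of the (descendingly
ordered, auto-reduced) family `G`: the first element for each `κ`-index
contributes `(g_j, {φ,ρ})`; every other `g_j` contributes the pairs
`(φ^k g_j, {ρ})` for `0 ≤ k < deg_φ(lm g_{j-1}) − deg_φ(lm g_j)`. -/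
def JanetDecompPairs (γφ : K →+* K) {s : ℕ} (G : Fin s → Fr K d)
    (lmg : Fin s → MonIx d) : Set (Fr K d × (Bool × Bool)) :=
  {q | ∃ a : Fin s, IsFirst lmg a ∧ q = (G a, (true, true))} ∪
  {q | ∃ (a a' : Fin s) (k : ℕ), ¬ IsFirst lmg a ∧ (a' : ℕ) + 1 = (a : ℕ) ∧
      k + (lmg a).2.1 < (lmg a').2.1 ∧ q = ((PhiMul γφ)^[k] (G a), (false, true))}

/-- `J` is the Janet decomposition of the auto-reduced family `G`
(ordered descendingly by leading monomials). -/
def IsJanetDecompOf (γφ γρ : K →+* K) {N : Submodule K (Fr K d)}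
    (J : JanetBasis γφ γρ d N) {s : ℕ} (G : Fin s → Fr K d)
    (lmg : Fin s → MonIx d) : Prop :=
  AutoReduced G lmg ∧ (∀ a b : Fin s, a < b → MLt (lmg b) (lmg a)) ∧
    {q : Fr K d × (Bool × Bool) | ∃ i, q = (J.b i, J.μ i)} = JanetDecompPairs γφ G lmg

end JanetSetup

open JanetSetup

/-!
Below `n_i` the monomial `φ^{j+1} κ_i` lies in no cone of `J`, by minimality of `n_i`. At
`j + 1 = n_i` it is the leading monomial of `b_i`, and subtracting `lc(b_i)⁻¹ b_i` leaves the
non-leading monomials of `b_i`. In a Janet decomposition `b_i = φ^k g` for some `g ∈ G`, and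
`k = 0`: otherwise the pair `(g, {ρ})` would also belong to `J`, with leading monomial
`φ^{n_i - k} κ_i`. Every cone of `J` lies in the full cone of the leading monomial of some
element of `G`, so the non-leading monomials of `g` are reduced, by auto-reducedness for the
other elements of `G` and because they are smaller than `lm(g)` for `g` itself.
-/

theorem Finsupp.support_single_sub_inv_smul_subset {K α : Type*} [DivisionRing K]
    [DecidableEq α] {f : α →₀ K} {m : α} (hm : f m ≠ 0) :
    (Finsupp.single m 1 - (f m)⁻¹ • f).support ⊆ f.support.erase m := by
  intro x hx
  rw [Finsupp.mem_support_iff, Finsupp.sub_apply, Finsupp.smul_apply, smul_eq_mul] at hx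
  rcases eq_or_ne x m with rfl | hxm
  · simp [inv_mul_cancel₀ hm] at hx
  · rw [Finsupp.single_eq_of_ne hxm, zero_sub, neg_ne_zero] at hx
    exact Finset.mem_erase.mpr ⟨hxm, Finsupp.mem_support_iff.mpr (right_ne_zero_of_mul hx)⟩

namespace JanetSetup

variable {K : Type} [Field K] {d : ℕ}

theorem MLt.asymm {a b : MonIx d} (hab : MLt a b) (hba : MLt b a) : False := by
  obtain ⟨i₁, k₁, j₁⟩ := a
  obtain ⟨i₂, k₂, j₂⟩ := b
  simp only [MLt, Fin.lt_def, Fin.ext_iff] at hab hba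
  omega

theorem MLt.phiShift {a b : MonIx d} (h : MLt a b) :
    MLt (a.1, a.2.1 + 1, a.2.2) (b.1, b.2.1 + 1, b.2.2) := by
  obtain ⟨i₁, k₁, j₁⟩ := a
  obtain ⟨i₂, k₂, j₂⟩ := b
  simp only [MLt] at h ⊢
  omega

theorem not_mlt_of_mem_cone {μ : Bool × Bool} {p x : MonIx d} (hx : x ∈ Cone μ p) :
    ¬ MLt x p := by
  obtain ⟨a, b, -, -, rfl⟩ := hx
  unfold MLt
  simp only [lt_irrefl, false_or]
  omega

theorem IsLm.unique {f : Fr K d} {m m' : MonIx d} (h : IsLm f m) (h' : IsLm f m') :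
    m = m' := by
  by_contra hne
  exact (h.2 m' h'.1 (Ne.symm hne)).asymm (h'.2 m h.1 hne)

theorem support_phiMul (γφ : K →+* K) (f : Fr K d) :
    (PhiMul γφ f).support = f.support.image fun m => (m.1, m.2.1 + 1, m.2.2) := by
  have hshift : Function.Injective fun m : MonIx d => ((m.1, m.2.1 + 1, m.2.2) : MonIx d) := by
    rintro ⟨i₁, k₁, j₁⟩ ⟨i₂, k₂, j₂⟩ h
    simp only [Prod.mk.injEq] at h ⊢
    omega
  rw [PhiMul, Finsupp.mapDomain_support_of_injective hshift,
    Finsupp.support_mapRange_of_injective _ _ γφ.injective]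

theorem phiMul_single (γφ : K →+* K) (m : MonIx d) (x : K) :
    PhiMul γφ (Finsupp.single m x) = Finsupp.single (m.1, m.2.1 + 1, m.2.2) (γφ x) := by
  rw [PhiMul, Finsupp.mapRange_single, Finsupp.mapDomain_single]

theorem IsLm.phiMul (γφ : K →+* K) {f : Fr K d} {m : MonIx d} (h : IsLm f m) :
    IsLm (PhiMul γφ f) (m.1, m.2.1 + 1, m.2.2) := by
  simp only [IsLm, support_phiMul, Finset.mem_image]
  refine ⟨⟨m, h.1, rfl⟩, ?_⟩
  rintro _ ⟨m', hm', rfl⟩ hne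
  exact (h.2 m' hm' fun h' => hne (h' ▸ rfl)).phiShift

theorem IsLm.phiMul_iterate (γφ : K →+* K) {f : Fr K d} {m : MonIx d} (h : IsLm f m)
    (k : ℕ) : IsLm ((PhiMul γφ)^[k] f) (m.1, m.2.1 + k, m.2.2) := by
  induction k with
  | zero => exact h
  | succ k ih =>
    rw [Function.iterate_succ_apply']
    exact ih.phiMul γφ

variable {γφ γρ : K →+* K}

theorem mem_dSpan_of_mem {s : Set (Fr K d)} {g : Fr K d} (hg : g ∈ s) :
    g ∈ DSpan γφ γρ s :=
  Submodule.subset_span ⟨0, 0, g, hg, rfl⟩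

variable {N : Submodule K (Fr K d)} {J : JanetBasis γφ γρ d N}

theorem le_of_nVal_eq {i : Fin d} {n k : ℕ} (hn : nVal γφ γρ J i = n) {ix : Fin J.r}
    (hix : J.lmb ix = (i, k, 0)) : n ≤ k := by
  have : nVal γφ γρ J i ≤ k := sInf_le ⟨k, rfl, ix, hix⟩
  exact_mod_cast hn ▸ this

theorem notMem_cone_of_lt_nVal {i : Fin d} {n k : ℕ} (hn : nVal γφ γρ J i = n) (hk : k < n)
    (ix : Fin J.r) : ((i, k, 0) : MonIx d) ∉ Cone (J.μ ix) (J.lmb ix) := by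
  rintro ⟨a, b, -, -, heq⟩
  rcases hl : J.lmb ix with ⟨i₀, k₀, j₀⟩
  rw [hl] at heq
  simp only [Prod.mk.injEq] at heq
  obtain ⟨rfl, rfl, hb⟩ := heq
  obtain rfl : j₀ = 0 := by omega
  have := le_of_nVal_eq hn hl
  omega

namespace IsJanetDecompOf

variable {s : ℕ} {G : Fin s → Fr K d} {lmg : Fin s → MonIx d}

theorem exists_b_eq_phiMul_iterate (hJD : IsJanetDecompOf γφ γρ J G lmg) (ix : Fin J.r) :
    ∃ a k, J.b ix = (PhiMul γφ)^[k] (G a) ∧ (k ≠ 0 → ∃ ix', J.b ix' = G a) := by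
  have hmem : (J.b ix, J.μ ix) ∈ JanetDecompPairs γφ G lmg := hJD.2.2 ▸ ⟨ix, rfl⟩
  rcases hmem with ⟨a, -, heq⟩ | ⟨a, a', k, hnf, hsucc, hlt, heq⟩
  · exact ⟨a, 0, congrArg Prod.fst heq, fun h => absurd rfl h⟩
  · refine ⟨a, k, congrArg Prod.fst heq, fun _ => ?_⟩
    -- `k = 0` satisfies the same bound, so `(g_a, {ρ})` is itself one of the pairs
    have hpair : (G a, (false, true)) ∈ JanetDecompPairs γφ G lmg :=
      Or.inr ⟨a, a', 0, hnf, hsucc, by omega, rfl⟩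
    rw [← hJD.2.2] at hpair
    obtain ⟨ix', hix'⟩ := hpair
    exact ⟨ix', (congrArg Prod.fst hix').symm⟩

theorem lmb_eq (hJD : IsJanetDecompOf γφ γρ J G lmg) {ix : Fin J.r} {a : Fin s} {k : ℕ}
    (hb : J.b ix = (PhiMul γφ)^[k] (G a)) :
    J.lmb ix = ((lmg a).1, (lmg a).2.1 + k, (lmg a).2.2) :=
  (J.b_lm ix).unique (hb ▸ (hJD.1.1 a).2.phiMul_iterate γφ k)

theorem exists_b_eq_of_lmb_eq (hJD : IsJanetDecompOf γφ γρ J G lmg) {i : Fin d} {n : ℕ}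
    (hn : nVal γφ γρ J i = n) {ix : Fin J.r} (hix : J.lmb ix = (i, n, 0)) :
    ∃ a, J.b ix = G a ∧ lmg a = (i, n, 0) := by
  obtain ⟨a, k, hb, hfirst⟩ := hJD.exists_b_eq_phiMul_iterate ix
  have hlm := hJD.lmb_eq hb
  rw [hix] at hlm
  obtain rfl | hk0 := eq_or_ne k 0
  · exact ⟨a, hb, by rw [hlm, add_zero]⟩
  · obtain ⟨ix', hix'⟩ := hfirst hk0
    simp only [Prod.mk.injEq] at hlm
    have := le_of_nVal_eq (k := (lmg a).2.1) hn ((hJD.lmb_eq (k := 0) hix').trans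
      (Prod.ext hlm.1.symm (Prod.ext (add_zero _) hlm.2.2.symm)))
    omega

theorem notMem_cone_of_mem_support (hJD : IsJanetDecompOf γφ γρ J G lmg) {a : Fin s}
    {m : MonIx d} (hm : m ∈ (G a).support) (hne : m ≠ lmg a) (ix : Fin J.r) :
    m ∉ Cone (J.μ ix) (J.lmb ix) := by
  rintro ⟨α, β, -, -, rfl⟩
  obtain ⟨a', k, hb, -⟩ := hJD.exists_b_eq_phiMul_iterate ix
  have hcone : ((J.lmb ix).1, (J.lmb ix).2.1 + α, (J.lmb ix).2.2 + β) ∈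
      Cone (true, true) (lmg a') :=
    ⟨k + α, β, Or.inl rfl, Or.inl rfl, by rw [hJD.lmb_eq hb, Nat.add_assoc]⟩
  obtain rfl | ha := eq_or_ne a' a
  · exact not_mlt_of_mem_cone hcone ((hJD.1.1 a').2.2 _ hm hne)
  · exact hJD.1.2.2 a _ hm a' ha hcone

end IsJanetDecompOf

end JanetSetup

theorem normal_form_of_phi_mul_Wgen_general
    {K : Type} [Field K] {d : ℕ} (γφ γρ : K →+* K)
    -- the `ρ`-action on the basis is given by the matrix `D ∈ Mat_{d×d}(K⟨φ⟩)`
    (Dmat : Fin d → Fin d → (ℕ →₀ K))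
    -- `J` is a Janet basis of `⟨p_1, …, p_d⟩`
    (J : JanetBasis γφ γρ d (DSpan γφ γρ (Set.range (pelt Dmat))))
    -- `J` is the Janet decomposition of an auto-reduced set `G` generating the
    -- same submodule as `p_1, …, p_d`
    {s : ℕ} (G : Fin s → Fr K d) (lmg : Fin s → MonIx d)
    (hJD : IsJanetDecompOf γφ γρ J G lmg)
    -- `(b_i, μ_i) ∈ J` is the pair with `lm(b_i) = φ^{n_i} κ_i`, indexed by `bi i`
    (bi : Fin d → Fin J.r)
    (hbi : ∀ i : Fin d, ∃ n : ℕ, (n : ℕ∞) = nVal γφ γρ J i ∧ J.lmb (bi i) = (i, n, 0))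
    :
    ∀ (i : Fin d) (j n : ℕ), (n : ℕ∞) = nVal γφ γρ J i → j < n →
      (j + 1 < n →
        IsNFOf γφ γρ J Set.univ
          (PhiMul γφ (Finsupp.single (i, j, 0) (1 : K)))
          (PhiMul γφ (Finsupp.single (i, j, 0) (1 : K)))) ∧
      (j + 1 = n →
        IsNFOf γφ γρ J Set.univ
          (PhiMul γφ (Finsupp.single (i, j, 0) (1 : K)))
          (PhiMul γφ (Finsupp.single (i, j, 0) (1 : K))
            - (J.b (bi i) (J.lmb (bi i)))⁻¹ • J.b (bi i))) := by
  intro i j n hn _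
  simp only [phiMul_single, map_one]
  refine ⟨fun hj => ⟨by simp, ?_⟩, fun hj => ⟨?_, ?_⟩⟩
  · intro m hm ix _
    rw [Finsupp.support_single _ one_ne_zero, Finset.mem_singleton] at hm
    exact hm ▸ notMem_cone_of_lt_nVal hn.symm hj ix
  · rw [sub_sub_cancel]
    exact Submodule.smul_mem _ _ (mem_dSpan_of_mem ⟨bi i, Set.mem_univ _, rfl⟩)
  · obtain ⟨n', hn', hlm⟩ := hbi i
    obtain rfl : n' = n := by exact_mod_cast hn'.trans hn.symm
    obtain ⟨a, hb, hla⟩ := hJD.exists_b_eq_of_lmb_eq hn.symm hlm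
    intro m hm ix _
    rw [hj, ← hlm] at hm
    obtain ⟨hne, hmb⟩ := Finset.mem_erase.mp
      (Finsupp.support_single_sub_inv_smul_subset
        (Finsupp.mem_support_iff.mp (J.b_lm (bi i)).1) hm)
    exact hJD.notMem_cone_of_mem_support (hb ▸ hmb) (hla ▸ hlm ▸ hne) ix

theorem normal_form_of_phi_mul_Wgen
    {K : Type} [Field K] {d : ℕ} (γφ γρ : K →+* K)
    (hcomm : ∀ x : K, γφ (γρ x) = γρ (γφ x))
    {M : Type} [AddCommGroup M] [Module K M]
    -- `M` is a left `D`-module: `F` and `S` are the commuting semilinear actions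
    -- of `φ` and `ρ` on `M`
    (F S : M →+ M)
    (hF : ∀ (x : K) (m : M), F (x • m) = γφ x • F m)
    (hS : ∀ (x : K) (m : M), S (x • m) = γρ x • S m)
    (hFS : ∀ m : M, F (S m) = S (F m))
    -- `M` is free of rank `d` as `K⟨φ⟩`-module with basis `κ̄_1, …, κ̄_d`
    (κb : Fin d → M)
    (hli : LinearIndependent K fun p : Fin d × ℕ => F^[p.2] (κb p.1))
    (hsp : Submodule.span K (Set.range fun p : Fin d × ℕ => F^[p.2] (κb p.1)) = ⊤)
    -- the `ρ`-action on the basis is given by the matrix `D ∈ Mat_{d×d}(K⟨φ⟩)`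
    (Dmat : Fin d → Fin d → (ℕ →₀ K))
    (hact : ∀ i, S (κb i) = ∑ j : Fin d, (Dmat i j).sum fun k x => x • F^[k] (κb j))
    -- `J` is a Janet basis of `⟨p_1, …, p_d⟩`
    (J : JanetBasis γφ γρ d (DSpan γφ γρ (Set.range (pelt Dmat))))
    -- `J` is the Janet decomposition of an auto-reduced set `G` generating the
    -- same submodule as `p_1, …, p_d`
    {s : ℕ} (G : Fin s → Fr K d) (lmg : Fin s → MonIx d)
    (hGspan : DSpan γφ γρ (Set.range G) = DSpan γφ γρ (Set.range (pelt Dmat)))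
    (hJD : IsJanetDecompOf γφ γρ J G lmg)
    -- `n_i < ∞` for all `i`
    (hfin : ∀ i : Fin d, nVal γφ γρ J i < ⊤)
    -- `(b_i, μ_i) ∈ J` is the pair with `lm(b_i) = φ^{n_i} κ_i`, indexed by `bi i`
    (bi : Fin d → Fin J.r)
    (hbi : ∀ i : Fin d, ∃ n : ℕ, (n : ℕ∞) = nVal γφ γρ J i ∧ J.lmb (bi i) = (i, n, 0))
    :
    ∀ (i : Fin d) (j n : ℕ), (n : ℕ∞) = nVal γφ γρ J i → j < n →
      (j + 1 < n →
        IsNFOf γφ γρ J Set.univ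
          (PhiMul γφ (Finsupp.single (i, j, 0) (1 : K)))
          (PhiMul γφ (Finsupp.single (i, j, 0) (1 : K)))) ∧
      (j + 1 = n →
        IsNFOf γφ γρ J Set.univ
          (PhiMul γφ (Finsupp.single (i, j, 0) (1 : K)))
          (PhiMul γφ (Finsupp.single (i, j, 0) (1 : K))
            - (J.b (bi i) (J.lmb (bi i)))⁻¹ • J.b (bi i))) :=
  normal_form_of_phi_mul_Wgen_general γφ γρ Dmat J G lmg hJD bi hbi
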